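/- Let p ≥ 5 be a prime and let k be an integer with 1 ≤ k < (p−1)/2. Then Φ(k+1,k,p) ≤ 2 + (p−3)/(2k) (as an inequality of rational numbers). -/
import Mathlib


/-- Lee weight of an element of `ZMod q`. -/
noncomputable def leeWt {q : ℕ} (a : ZMod q) : ℕ := min (ZMod.val a) (q - ZMod.val a)

/-- Lee weight of a vector over `ZMod q`. -/
noncomputable def leeWtVec {q n : ℕ} (x : Fin n → ZMod q) : ℕ := ∑ i, leeWt (x i)

/-- Minimum Lee distance (= minimum Lee weight of a nonzero codeword) of a linear code. -/
noncomputable def minLee {q n : ℕ} (C : Submodule (ZMod q) (Fin n → ZMod q)) : ℕ :=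
  sInf {w | ∃ x ∈ C, x ≠ 0 ∧ leeWtVec x = w}

/-- Minimum Hamming distance (= minimum Hamming weight of a nonzero codeword). -/
noncomputable def minHam {q n : ℕ} (C : Submodule (ZMod q) (Fin n → ZMod q)) : ℕ :=
  sInf {w | ∃ x ∈ C, x ≠ 0 ∧ hammingNorm x = w}

/-- Average nonzero Lee weight of `ZMod q`. -/
noncomputable def mu (q : ℕ) : ℚ :=
  if Even q then (q : ℚ)^2 / (4 * ((q : ℚ) - 1)) else ((q : ℚ) + 1) / 4

/-- `Phi n k p`: the maximum minimum Lee distance over `k`-dimensional linear codes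
of length `n` over `ZMod p`. -/
noncomputable def Phi (n k p : ℕ) : ℕ :=
  sSup {d | ∃ C : Submodule (ZMod p) (Fin n → ZMod p),
    Module.finrank (ZMod p) ↥C = k ∧ minLee C = d}

/-- Rank of a linear code over `ZMod q`: minimal number of generators. -/
noncomputable def codeRank {q n : ℕ} (C : Submodule (ZMod q) (Fin n → ZMod q)) : ℕ :=
  sInf {m | ∃ s : Finset (Fin n → ZMod q), s.card = m ∧
    Submodule.span (ZMod q) (↑s : Set (Fin n → ZMod q)) = C}

/-- `PhiR n K q`: the maximum minimum Lee distance over rank-`K` linear codes of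
length `n` over `ZMod q`. -/
noncomputable def PhiR (n K q : ℕ) : ℕ :=
  sSup {d | ∃ C : Submodule (ZMod q) (Fin n → ZMod q), codeRank C = K ∧ minLee C = d}

section helpers
variable {p : ℕ} [NeZero p]

lemma leeWt_zero : leeWt (0 : ZMod p) = 0 := by
  simp [leeWt, ZMod.val_zero]

lemma leeWt_natCast_le (m : ℕ) : leeWt ((m : ZMod p)) ≤ m := by
  refine le_trans (min_le_left _ _) ?_
  rw [ZMod.val_natCast]; exact Nat.mod_le _ _

lemma leeWt_add_le (a b : ZMod p) : leeWt (a + b) ≤ leeWt a + leeWt b := by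
  unfold leeWt
  have ha := ZMod.val_lt a; have hb := ZMod.val_lt b
  have h := ZMod.val_add a b
  have h2 : (a + b).val = a.val + b.val ∨ (a + b).val + p = a.val + b.val := by
    rcases Nat.lt_or_ge (a.val + b.val) p with h' | h'
    · left; rw [h, Nat.mod_eq_of_lt h']
    · right; rw [h, Nat.mod_eq_sub_mod h', Nat.mod_eq_of_lt (by omega)]; omega
  omega

lemma leeWt_neg (a : ZMod p) : leeWt (-a) = leeWt a := by
  unfold leeWt
  rw [ZMod.neg_val]
  have ha := ZMod.val_lt a
  by_cases h : a = 0
  · simp [h, ZMod.val_zero]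
  · rw [if_neg h]
    have : a.val ≠ 0 := fun h0 => h ((ZMod.val_eq_zero a).1 h0)
    omega

lemma leeWt_one (hp : 1 < p) : leeWt (1 : ZMod p) ≤ 1 := by
  haveI : Fact (1 < p) := ⟨hp⟩
  refine le_trans (min_le_left _ _) ?_
  rw [ZMod.val_one]

lemma leeWt_sign (hp : 1 < p) {ε : ZMod p} (h : ε = 1 ∨ ε = -1) : leeWt ε ≤ 1 := by
  rcases h with h1 | h1
  · rw [h1]; exact leeWt_one hp
  · rw [h1]
    rw [show (-1 : ZMod p) = -(1 : ZMod p) by ring, leeWt_neg]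
    exact leeWt_one hp

lemma leeWtVec_single {n : ℕ} (m : Fin n) (c : ZMod p) :
    leeWtVec (Pi.single m c) = leeWt c := by
  unfold leeWtVec
  rw [Fintype.sum_eq_single m]
  · rw [Pi.single_eq_same]
  · intro t ht
    rw [Pi.single_eq_of_ne ht, leeWt_zero]

lemma leeWtVec_add_le {n : ℕ} (x y : Fin n → ZMod p) :
    leeWtVec (x + y) ≤ leeWtVec x + leeWtVec y := by
  unfold leeWtVec
  rw [← Finset.sum_add_distrib]
  exact Finset.sum_le_sum fun i _ => leeWt_add_le _ _

lemma exists_sign {c : ZMod p} (hc : c ≠ 0) :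
    ∃ ε : ZMod p, (ε = 1 ∨ ε = -1) ∧ ε * ((leeWt c : ℕ) : ZMod p) = c := by
  have hval : c.val < p := ZMod.val_lt c
  rcases le_or_gt c.val (p - c.val) with h | h
  · refine ⟨1, Or.inl rfl, ?_⟩
    rw [one_mul]
    unfold leeWt
    rw [min_eq_left h, ZMod.natCast_val, ZMod.cast_id]
  · refine ⟨-1, Or.inr rfl, ?_⟩
    unfold leeWt
    rw [min_eq_right h.le, Nat.cast_sub hval.le, ZMod.natCast_self, ZMod.natCast_val,
      ZMod.cast_id]
    ring

lemma leeWt_pos {c : ZMod p} (hc : c ≠ 0) : 1 ≤ leeWt c := by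
  have hval : c.val < p := ZMod.val_lt c
  have : c.val ≠ 0 := fun h0 => hc ((ZMod.val_eq_zero c).1 h0)
  unfold leeWt; omega

lemma leeWt_le_half {r : ℕ} (hp : p = 2 * r + 1) (c : ZMod p) : leeWt c ≤ r := by
  have hval : c.val < p := ZMod.val_lt c
  unfold leeWt; omega

end helpers

lemma minLee_le_of_mem {q n : ℕ} {C : Submodule (ZMod q) (Fin n → ZMod q)}
    {x : Fin n → ZMod q} (hx : x ∈ C) (hx0 : x ≠ 0) : minLee C ≤ leeWtVec x :=
  Nat.sInf_le ⟨x, hx, hx0, rfl⟩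

theorem phi_kp1_k_le (p k : ℕ) (hp : p.Prime) (hp5 : 5 ≤ p) (hk : 1 ≤ k)
    (hkp : 2 * k < p - 1) :
    (Phi (k + 1) k p : ℚ) ≤ 2 + ((p : ℚ) - 3) / (2 * (k : ℚ)) := by
  haveI : Fact p.Prime := ⟨hp⟩
  haveI : NeZero p := ⟨hp.pos.ne'⟩
  obtain ⟨r, hr⟩ : ∃ r, p = 2 * r + 1 := by
    rcases hp.eq_two_or_odd' with h2 | ⟨r, hrr⟩
    · omega
    · exact ⟨r, hrr⟩
  have hr2 : 2 ≤ r := by omega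
  obtain ⟨q, hqdef⟩ : ∃ q : ℕ, q = (p - 3) / (2 * k) := ⟨_, rfl⟩
  have hq_eq : q = (r - 1) / k := by
    rw [hqdef, show p - 3 = 2 * (r - 1) by omega, Nat.mul_div_mul_left _ _ (by norm_num)]
  -- main bound for every k-dimensional code
  have main : ∀ C : Submodule (ZMod p) (Fin (k + 1) → ZMod p),
      Module.finrank (ZMod p) C = k → minLee C ≤ 2 + q := by
    intro C hC
    have htop : C < ⊤ := by
      rw [lt_top_iff_ne_top]
      intro h
      rw [h, finrank_top, Module.finrank_pi, Fintype.card_fin] at hC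
      omega
    obtain ⟨f, hf0, hfbot⟩ := C.exists_dual_map_eq_bot_of_lt_top htop inferInstance
    have hCle : C ≤ LinearMap.ker f := by
      intro x hx
      rw [LinearMap.mem_ker]
      have hmem : f x ∈ C.map f := ⟨x, hx, rfl⟩
      rwa [hfbot, Submodule.mem_bot] at hmem
    have hker : Module.finrank (ZMod p) (LinearMap.ker f) ≤ k := by
      have h1 := LinearMap.finrank_range_add_finrank_ker f
      rw [Module.finrank_pi, Fintype.card_fin] at h1
      have h2 : LinearMap.range f ≠ ⊥ := fun h => hf0 (LinearMap.range_eq_bot.1 h)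
      have h3 : 0 < Module.finrank (ZMod p) (LinearMap.range f) := by
        rcases Nat.eq_zero_or_pos (Module.finrank (ZMod p) (LinearMap.range f)) with h | h
        · exact absurd (Submodule.finrank_eq_zero.1 h) h2
        · exact h
      omega
    have hCeq : C = LinearMap.ker f :=
      Submodule.eq_of_le_of_finrank_le hCle (by rw [hC]; exact hker)
    -- coefficients
    obtain ⟨a, ha⟩ : ∃ a : Fin (k + 1) → ZMod p, ∀ m, a m = f (Pi.single m 1) :=
      ⟨_, fun _ => rfl⟩
    have hsingle : ∀ (m : Fin (k + 1)) (c : ZMod p), f (Pi.single m c) = c * a m := by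
      intro m c
      have hxc : Pi.single m c = c • (Pi.single m 1 : Fin (k + 1) → ZMod p) := by
        ext t
        by_cases h : t = m
        · subst h; simp
        · simp [Pi.single_eq_of_ne h]
      rw [hxc, map_smul, smul_eq_mul, ha m]
    have hmem_iff : ∀ x, x ∈ C ↔ f x = 0 := by
      intro x; rw [hCeq, LinearMap.mem_ker]
    by_cases hA : ∃ m, a m = 0
    · -- weight-1 codeword
      obtain ⟨m, hm⟩ := hA
      have hx : (Pi.single m 1 : Fin (k + 1) → ZMod p) ∈ C := by
        rw [hmem_iff, hsingle, hm, mul_zero]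
      have hx0 : (Pi.single m 1 : Fin (k + 1) → ZMod p) ≠ 0 := by
        intro h
        have := congr_fun h m
        rw [Pi.single_eq_same] at this
        exact one_ne_zero this
      calc minLee C ≤ leeWtVec (Pi.single m (1 : ZMod p)) := minLee_le_of_mem hx hx0
        _ = leeWt (1 : ZMod p) := leeWtVec_single m 1
        _ ≤ 1 := leeWt_one hp.one_lt
        _ ≤ 2 + q := le_trans (by norm_num) (Nat.le_add_right 2 q)
    · push_neg at hA
      obtain ⟨z, -⟩ : ∃ z : Fin (k + 1), True := ⟨⟨0, Nat.succ_pos k⟩, trivial⟩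
      obtain ⟨b, hb⟩ : ∃ b : Fin (k + 1) → ZMod p, ∀ m, b m = a m * (a z)⁻¹ :=
        ⟨_, fun _ => rfl⟩
      have hbne : ∀ m, b m ≠ 0 := by
        intro m
        rw [hb m]
        exact mul_ne_zero (hA m) (inv_ne_zero (hA z))
      have hba : ∀ m, b m * a z = a m := by
        intro m
        rw [hb m]
        exact inv_mul_cancel_right₀ (hA z) (a m)
      obtain ⟨w, hwdef⟩ : ∃ w : Fin (k + 1) → ℕ, ∀ m, w m = leeWt (b m) :=
        ⟨_, fun _ => rfl⟩
      have hw1 : ∀ m, 1 ≤ w m := fun m => (hwdef m) ▸ leeWt_pos (hbne m)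
      have hwr : ∀ m, w m ≤ r := fun m => (hwdef m) ▸ leeWt_le_half hr (b m)
      -- pigeonhole
      have hqpos : 0 < q + 1 := Nat.succ_pos _
      have hblocklt : ∀ m : Fin (k + 1), (w m - 1) / (q + 1) < k := by
        intro m
        rw [Nat.div_lt_iff_lt_mul hqpos]
        have hdm := Nat.div_add_mod (r - 1) k
        have hml := Nat.mod_lt (r - 1) (show 0 < k by omega)
        have := hwr m
        rw [hq_eq, Nat.mul_add, Nat.mul_one]
        omega
      obtain ⟨i, -, j, -, hij, hblock⟩ :=
        Finset.exists_ne_map_eq_of_card_lt_of_maps_to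
          (s := (Finset.univ : Finset (Fin (k + 1)))) (t := Finset.range k)
          (by simp) (fun m _ => Finset.mem_range.mpr (hblocklt m))
      have hgap : w j ≤ w i + q ∧ w i ≤ w j + q := by
        have h1 := Nat.div_add_mod (w i - 1) (q + 1)
        have h2 := Nat.div_add_mod (w j - 1) (q + 1)
        have h3 := Nat.mod_lt (w i - 1) hqpos
        have h4 := Nat.mod_lt (w j - 1) hqpos
        have h5 := hw1 i; have h6 := hw1 j
        rw [hblock] at h1
        omega
      -- WLOG w i ≤ w j
      obtain ⟨i, j, hij, hwij, hd⟩ : ∃ i j : Fin (k + 1), i ≠ j ∧ w i ≤ w j ∧ w j - w i ≤ q := by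
        rcases le_total (w i) (w j) with h | h
        · exact ⟨i, j, hij, h, by omega⟩
        · exact ⟨j, i, hij.symm, h, by omega⟩
      obtain ⟨εi, hεi1, hεi⟩ := exists_sign (hbne i)
      obtain ⟨εj, hεj1, hεj⟩ := exists_sign (hbne j)
      rw [← hwdef i] at hεi
      rw [← hwdef j] at hεj
      obtain ⟨d, hdd⟩ : ∃ d : ℕ, d = w j - w i := ⟨_, rfl⟩
      have hd : d ≤ q := by omega
      obtain ⟨x, hx⟩ : ∃ x : Fin (k + 1) → ZMod p,
          x = Pi.single i εi + Pi.single j (-εj)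
            + Pi.single z ((d : ℕ) : ZMod p) := ⟨_, rfl⟩
      have hεi0 : εi ≠ 0 := by rcases hεi1 with h | h <;> simp [h]
      have hεj0 : εj ≠ 0 := by rcases hεj1 with h | h <;> simp [h]
      have hfx : f x = 0 := by
        rw [hx, map_add, map_add, hsingle, hsingle, hsingle]
        rw [← hba i, ← hba j]
        have hwd : ((w i : ℕ) : ZMod p) + ((d : ℕ) : ZMod p) = ((w j : ℕ) : ZMod p) := by
          rw [← Nat.cast_add]
          congr 1
          omega
        have hbi : εi * b i = ((w i : ℕ) : ZMod p) := by
          rw [← hεi]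
          rcases hεi1 with h | h <;> (rw [h]; ring)
        have hbj : εj * b j = ((w j : ℕ) : ZMod p) := by
          rw [← hεj]
          rcases hεj1 with h | h <;> (rw [h]; ring)
        calc εi * (b i * a z) + -εj * (b j * a z) + (d : ZMod p) * a z
            = ((εi * b i) + -(εj * b j) + (d : ZMod p)) * a z := by ring
          _ = 0 := by rw [hbi, hbj, ← hwd]; ring
      have hxC : x ∈ C := (hmem_iff x).2 hfx
      have hx0 : x ≠ 0 := by
        intro h
        by_cases hi0 : i = z
        · have hj0 : j ≠ z := fun hj => hij (by rw [hi0, hj])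
          have := congr_fun h j
          rw [hx] at this
          simp only [Pi.add_apply, Pi.single_eq_same, Pi.zero_apply] at this
          rw [Pi.single_eq_of_ne (Ne.symm hij), Pi.single_eq_of_ne hj0] at this
          simp at this
          exact hεj0 this
        · have := congr_fun h i
          rw [hx] at this
          simp only [Pi.add_apply, Pi.zero_apply] at this
          rw [Pi.single_eq_same, Pi.single_eq_of_ne hij, Pi.single_eq_of_ne hi0] at this
          simp at this
          exact hεi0 this
      have hwt : leeWtVec x ≤ 2 + q := by
        have h1 : leeWtVec x ≤ leeWt εi + leeWt (-εj) + leeWt ((d : ℕ) : ZMod p) := by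
          rw [hx]
          calc leeWtVec ((Pi.single i εi : Fin (k + 1) → ZMod p)
                  + (Pi.single j (-εj) : Fin (k + 1) → ZMod p)
                  + (Pi.single z ((d : ℕ) : ZMod p) : Fin (k + 1) → ZMod p))
              ≤ leeWtVec ((Pi.single i εi : Fin (k + 1) → ZMod p)
                  + (Pi.single j (-εj) : Fin (k + 1) → ZMod p))
                + leeWtVec ((Pi.single z ((d : ℕ) : ZMod p) : Fin (k + 1) → ZMod p)) :=
                leeWtVec_add_le _ _
            _ ≤ (leeWtVec ((Pi.single i εi : Fin (k + 1) → ZMod p))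
                  + leeWtVec ((Pi.single j (-εj) : Fin (k + 1) → ZMod p)))
                + leeWtVec ((Pi.single z ((d : ℕ) : ZMod p) : Fin (k + 1) → ZMod p)) :=
                Nat.add_le_add_right (leeWtVec_add_le _ _) _
            _ = leeWt εi + leeWt (-εj) + leeWt ((d : ℕ) : ZMod p) := by
                rw [leeWtVec_single, leeWtVec_single, leeWtVec_single]
        have h2 : leeWt (-εj) ≤ 1 := by
          rw [leeWt_neg]; exact leeWt_sign hp.one_lt hεj1
        have h3 : leeWt εi ≤ 1 := leeWt_sign hp.one_lt hεi1
        have h4 : leeWt ((d : ℕ) : ZMod p) ≤ d := leeWt_natCast_le d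
        omega
      exact le_trans (minLee_le_of_mem hxC hx0) hwt
  -- from codes to Phi
  have hPhi : Phi (k + 1) k p ≤ 2 + q := by
    rw [Phi]
    rcases Set.eq_empty_or_nonempty
      {d | ∃ C : Submodule (ZMod p) (Fin (k + 1) → ZMod p),
        Module.finrank (ZMod p) ↥C = k ∧ minLee C = d} with hS | hS
    · rw [hS, csSup_empty]; exact Nat.zero_le _
    · refine csSup_le hS ?_
      rintro d ⟨C, hCk, rfl⟩
      exact main C hCk
  -- cast to ℚ
  have hcast : ((2 + q : ℕ) : ℚ) ≤ 2 + ((p : ℚ) - 3) / (2 * (k : ℚ)) := by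
    push_cast
    have h1 : ((q : ℕ) : ℚ) ≤ ((p - 3 : ℕ) : ℚ) / ((2 * k : ℕ) : ℚ) := by
      rw [hqdef]; exact Nat.cast_div_le
    have h2 : ((p - 3 : ℕ) : ℚ) = (p : ℚ) - 3 := by
      push_cast [Nat.cast_sub (by omega : 3 ≤ p)]; ring
    rw [h2] at h1
    push_cast at h1
    linarith
  calc (Phi (k + 1) k p : ℚ) ≤ ((2 + q : ℕ) : ℚ) := by exact_mod_cast hPhi
    _ ≤ _ := hcast
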